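/- Let e_0, ..., e_{n-1} ∈ ℤ^n with e_i · e_j = -δ_{ij}. Let C = Σ_{j=0}^{s-1} D_j with D_j = e_{i_j} - e_{I_j} type-a classes, i_{j+1} ∈ I_j (indices mod s), the i_j pairwise distinct, the I_j pairwise disjoint, and suppose {i_0,...,i_{s-1}} ∪ I_0 ∪ ... ∪ I_{s-1} = {0,...,n-1}. Then C = -e_J where J = (I_0 ∪ ... ∪ I_{s-1}) \ {i_0,...,i_{s-1}}, and #C - C² = n, where #C = s is the number of summands and C² = C · C. -/
import Mathlib


open Finset

/-- The standard negative definite intersection form on `ℤ^n`. -/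
def inter {n : ℕ} (x y : Fin n → ℤ) : ℤ := -∑ k, x k * y k

/-- The Donaldson class `e i`. -/
def E {n : ℕ} (i : Fin n) : Fin n → ℤ := Pi.single i 1

/-- `e_I = ∑_{i ∈ I} e_i`. -/
def ES {n : ℕ} (I : Finset (Fin n)) : Fin n → ℤ := ∑ i ∈ I, E i

lemma ES_apply {n : ℕ} (I : Finset (Fin n)) (k : Fin n) :
    ES I k = if k ∈ I then 1 else 0 := by
  simp [ES, E, Finset.sum_apply, Pi.single_apply]

lemma inter_ES {n : ℕ} (J : Finset (Fin n)) : inter (ES J) (ES J) = -(J.card : ℤ) := by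
  have : ∀ k, ES J k * ES J k = if k ∈ J then (1:ℤ) else 0 := by
    intro k; rw [ES_apply]; split <;> simp
  simp only [inter, this, Finset.sum_ite_mem, Finset.univ_inter, Finset.sum_const,
    nsmul_eq_mul, mul_one]

theorem stmt9 {n s : ℕ} (hs : 1 ≤ s) (i : Fin s → Fin n) (I : Fin s → Finset (Fin n))
    (ha : ∀ j : Fin s, i j ∉ I j)
    (hinj : Function.Injective i)
    (hdisj : ∀ p q : Fin s, p ≠ q → Disjoint (I p) (I q))
    (hnext : ∀ j : Fin s, i (j + ⟨1 % s, Nat.mod_lt _ (by omega)⟩) ∈ I j)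
    (hcover : (Finset.univ.image i) ∪ Finset.univ.biUnion I = (Finset.univ : Finset (Fin n))) :
    (∑ j, (E (i j) - ES (I j))) =
        -(ES ((Finset.univ.biUnion I) \ (Finset.univ.image i))) ∧
      (s : ℤ) - inter (∑ j, (E (i j) - ES (I j))) (∑ j, (E (i j) - ES (I j))) = n := by
  set U := Finset.univ.biUnion I with hU
  set V := Finset.univ.image i with hV
  have hVU : V ⊆ U := by
    intro x hx
    simp only [hV, Finset.mem_image, Finset.mem_univ, true_and] at hx
    obtain ⟨j, rfl⟩ := hx
    have h := hnext (j - ⟨1 % s, Nat.mod_lt _ (by omega)⟩)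
    haveI : NeZero s := ⟨by omega⟩
    rw [sub_add_cancel] at h
    exact Finset.mem_biUnion.2 ⟨_, Finset.mem_univ _, h⟩
  have hUuniv : U = Finset.univ := by
    rw [← hcover]; exact (Finset.union_eq_right.2 hVU).symm
  have hESV : ES V = ∑ j, E (i j) := by
    rw [ES, hV, Finset.sum_image (fun a _ b _ h => hinj h)]
  have hESU : ES U = ∑ j, ES (I j) := by
    rw [ES, hU, Finset.sum_biUnion]
    · rfl
    · intro p _ q _ hpq; exact hdisj p q hpq
  have hsdiff : ES (U \ V) = ES U - ES V := by
    have := Finset.sum_sdiff (f := fun k => E k) hVU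
    rw [ES, ES, ES, ← this]; abel
  have h1 : (∑ j, (E (i j) - ES (I j))) = -(ES (U \ V)) := by
    rw [Finset.sum_sub_distrib, ← hESV, ← hESU, hsdiff]; abel
  refine ⟨h1, ?_⟩
  have hcardV : V.card = s := by
    rw [hV, Finset.card_image_of_injective _ hinj, Finset.card_univ, Fintype.card_fin]
  have hcardJ : (U \ V).card = n - s := by
    rw [Finset.card_sdiff_of_subset hVU, hUuniv, Finset.card_univ, Fintype.card_fin, hcardV]
  have hsn : s ≤ n := by
    have := Finset.card_le_card (hVU.trans (Finset.subset_univ U))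
    rwa [hcardV, Finset.card_univ, Fintype.card_fin] at this
  rw [h1]
  have : inter (-(ES (U \ V))) (-(ES (U \ V))) = inter (ES (U \ V)) (ES (U \ V)) := by
    simp [inter]
  rw [this, inter_ES, hcardJ]
  push_cast [hsn]
  ring
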